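/- The 4×4 matrix M with rows (1,−1,0,−1), (−1,2,1,0), (0,1,1,−1), (−1,0,−1,2) is positive semidefinite of rank 2 and extremal in the cone of 4×4 PSD matrices with zero (1,3) and (2,4) entries. -/

import Mathlib

/-!
`M13 = Nᴴ N` for a `2 × 4` matrix `N` with `N Nᴴ = 3 • 1`, which gives positive
semidefiniteness and rank two. If `M13 = A + B` inside the cone, then `A` and `B` are
positive semidefinite, so the kernel of `M13` lies in the kernel of each summand; a symmetric
matrix with the zero pattern of the 4-cycle that kills the two-dimensional kernel of `M13` is
a multiple of `M13`, and the multiple is a diagonal entry of a PSD matrix, hence nonnegative.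
-/

open Matrix BigOperators

/-- The cone of real positive semidefinite matrices with zeros at nonedges of a graph
with adjacency relation `Adj`. -/
def psdCone {n : Type*} [Fintype n] (Adj : n → n → Prop) : Set (Matrix n n ℝ) :=
  {X | X.PosSemidef ∧ ∀ i j, i ≠ j → ¬ Adj i j → X i j = 0}

/-- `X` lies on an extreme ray of the convex cone `S`: it belongs to `S` and whenever
`X = A + B` with `A, B ∈ S`, both `A` and `B` are nonnegative multiples of `X`. -/
def IsExtremalIn {n : Type*} [Fintype n] (S : Set (Matrix n n ℝ)) (X : Matrix n n ℝ) : Prop :=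
  X ∈ S ∧ ∀ A B : Matrix n n ℝ, A ∈ S → B ∈ S → X = A + B →
    (∃ c : ℝ, 0 ≤ c ∧ A = c • X) ∧ (∃ d : ℝ, 0 ≤ d ∧ B = d • X)

/-- The cone `S^4_⪰0(C_4)` of PSD matrices vanishing at the nonedges `{1,3}` and `{2,4}`
of the 4-cycle (0-based: entries `(0,2)` and `(1,3)`). -/
def c4Cone : Set (Matrix (Fin 4) (Fin 4) ℝ) :=
  {X | X.PosSemidef ∧ X 0 2 = 0 ∧ X 2 0 = 0 ∧ X 1 3 = 0 ∧ X 3 1 = 0}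

def M13 : Matrix (Fin 4) (Fin 4) ℝ :=
  !![1, -1, 0, -1; -1, 2, 1, 0; 0, 1, 1, -1; -1, 0, -1, 2]

open scoped ComplexOrder in
theorem Matrix.PosSemidef.mulVec_eq_zero_of_add_mulVec_eq_zero {𝕜 n : Type*} [RCLike 𝕜]
    [Fintype n] {A B : Matrix n n 𝕜} (hA : A.PosSemidef) (hB : B.PosSemidef) {x : n → 𝕜}
    (h : (A + B) *ᵥ x = 0) : A *ᵥ x = 0 := by
  have hsum : star x ⬝ᵥ A *ᵥ x + star x ⬝ᵥ B *ᵥ x = 0 := by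
    rw [← dotProduct_add, ← add_mulVec, h, dotProduct_zero]
  rw [← hA.dotProduct_mulVec_zero_iff]
  exact ((add_eq_zero_iff_of_nonneg (hA.dotProduct_mulVec_nonneg x)
    (hB.dotProduct_mulVec_nonneg x)).mp hsum).1

theorem isExtremalIn_of_forall_ker {n : Type*} [Fintype n] {S : Set (Matrix n n ℝ)}
    {X : Matrix n n ℝ} (hX : X ∈ S) (hS : ∀ A ∈ S, A.PosSemidef)
    (h : ∀ A ∈ S, (∀ x, X *ᵥ x = 0 → A *ᵥ x = 0) → ∃ c : ℝ, 0 ≤ c ∧ A = c • X) :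
    IsExtremalIn S X := by
  refine ⟨hX, fun A B hA hB hAB => ⟨h A hA fun x hx => ?_, h B hB fun x hx => ?_⟩⟩
  · exact (hS A hA).mulVec_eq_zero_of_add_mulVec_eq_zero (hS B hB) (hAB ▸ hx)
  · exact (hS B hB).mulVec_eq_zero_of_add_mulVec_eq_zero (hS A hA) (add_comm A B ▸ hAB ▸ hx)

theorem Matrix.rank_eq_card_of_isUnit_mul {m n R : Type*} [Fintype m] [Fintype n]
    [DecidableEq m] [Field R] {N : Matrix m n R} {P : Matrix n m R} (h : IsUnit (N * P)) :
    N.rank = Fintype.card m :=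
  le_antisymm N.rank_le_card_height (rank_of_isUnit _ h ▸ rank_mul_le_left N P)

def N13 : Matrix (Fin 2) (Fin 4) ℝ := !![1, -1, 0, -1; 0, 1, 1, -1]

lemma M13_eq_conjTranspose_mul_self : M13 = N13ᴴ * N13 := by
  ext i j
  fin_cases i <;> fin_cases j <;>
    simp [M13, N13, mul_apply, Fin.sum_univ_two] <;> norm_num

lemma N13_mul_conjTranspose : N13 * N13ᴴ = (3 : ℝ) • 1 := by
  ext i j
  fin_cases i <;> fin_cases j <;>
    simp [N13, mul_apply, Fin.sum_univ_four] <;> norm_num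

lemma posSemidef_M13 : M13.PosSemidef :=
  M13_eq_conjTranspose_mul_self ▸ posSemidef_conjTranspose_mul_self N13

lemma rank_M13 : M13.rank = 2 := by
  rw [M13_eq_conjTranspose_mul_self, rank_conjTranspose_mul_self]
  refine rank_eq_card_of_isUnit_mul (P := N13ᴴ) ?_
  rw [N13_mul_conjTranspose, isUnit_iff_isUnit_det]
  simp

lemma M13_mem_c4Cone : M13 ∈ c4Cone :=
  ⟨posSemidef_M13, by simp [M13]⟩

lemma M13_mulVec_kernel : M13 *ᵥ ![-1, -1, 1, 0] = 0 ∧ M13 *ᵥ ![2, 1, 0, 1] = 0 := by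
  constructor <;> ext i <;> fin_cases i <;>
    simp [M13, mulVec, dotProduct, Fin.sum_univ_four] <;> norm_num

/-- Symmetry and the two forced zeros leave eight unknown entries, and the eight kernel
equations have rank seven, so `A` is determined by `A 0 0`. -/
lemma eq_smul_M13_of_mem_c4Cone {A : Matrix (Fin 4) (Fin 4) ℝ} (hA : A ∈ c4Cone)
    (h₁ : A *ᵥ ![-1, -1, 1, 0] = 0) (h₂ : A *ᵥ ![2, 1, 0, 1] = 0) : A = A 0 0 • M13 := by
  obtain ⟨hpsd, h02, h20, h13, h31⟩ := hA
  have hsymm (i j : Fin 4) : A j i = A i j := by simpa using hpsd.1.apply i j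
  have hrow₁ (i : Fin 4) : -A i 0 - A i 1 + A i 2 = 0 := by
    simpa [mulVec, dotProduct, Fin.sum_univ_four, sub_eq_add_neg] using congrFun h₁ i
  have hrow₂ (i : Fin 4) : 2 * A i 0 + A i 1 + A i 3 = 0 := by
    simpa [mulVec, dotProduct, Fin.sum_univ_four, mul_comm] using congrFun h₂ i
  ext i j
  fin_cases i <;> fin_cases j <;> simp [M13] <;>
    linarith [hrow₁ 0, hrow₁ 1, hrow₁ 2, hrow₁ 3, hrow₂ 0, hrow₂ 1, hrow₂ 2, hrow₂ 3,
      hsymm 0 1, hsymm 0 3, hsymm 1 2, hsymm 2 3]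

/-- The matrix with rows `(1,-1,0,-1), (-1,2,1,0), (0,1,1,-1), (-1,0,-1,2)` is PSD of
rank 2 and extremal in the cone of 4×4 PSD matrices with zero `(1,3)` and `(2,4)`
entries. -/
theorem M13_extremal :
    M13.PosSemidef ∧ M13.rank = 2 ∧ IsExtremalIn c4Cone M13 := by
  refine ⟨posSemidef_M13, rank_M13,
    isExtremalIn_of_forall_ker M13_mem_c4Cone (fun A hA => hA.1) fun A hA hker => ?_⟩
  exact ⟨A 0 0, hA.1.diag_nonneg, eq_smul_M13_of_mem_c4Cone hA
    (hker _ M13_mulVec_kernel.1) (hker _ M13_mulVec_kernel.2)⟩
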